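/- If an $m$-barycentric cover $\mathcal{F}$ of a space has primary complex $K$ (its nerve is the $m$-th barycentric subdivision of $K$), then $\mathrm{st}^{2^{m-1}-1}\mathcal{F} \prec \mathrm{jn}^m\mathcal{F}$ and every element of $\mathrm{jn}^m\mathcal{F}$ is contained in the corresponding element of $\mathrm{st}^{2^m - 1}\mathcal{F}$, i.e. $\mathrm{st}^{2^{m-1}-1}\mathcal{F} \prec \mathrm{jn}^m\mathcal{F} \subset \mathrm{st}^{2^m-1}\mathcal{F}$. -/

import Mathlib

open Set ContinuousMap
open scoped ENNReal

namespace NobelingPaper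

/-! Stars of indexed collections of sets. -/

/-- The star of a set `A` in an indexed collection `F`: the union of `A` with all
elements of `F` that intersect `A`. -/
def starSet {X ι : Type} (F : ι → Set X) (A : Set X) : Set X :=
  A ∪ ⋃ i ∈ {i | (F i ∩ A).Nonempty}, F i

/-- The star of the collection `F` in the collection `H`. -/
def starIn {X ι κ : Type} (H : κ → Set X) (F : ι → Set X) : ι → Set X :=
  fun i => starSet H (F i)

/-- The `k`-th star of `F` in `H`. -/
def starInPow {X ι κ : Type} (H : κ → Set X) (F : ι → Set X) : ℕ → ι → Set X
  | 0 => F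
  | k + 1 => starIn H (starInPow H F k)

/-- The `m`-th star of a collection: `st^m F = st_F (st^(m-1) F)`. -/
def starPow {X ι : Type} (F : ι → Set X) : ℕ → ι → Set X
  | 0 => F
  | m + 1 => starIn F (starPow F m)

/-- An abstract simplicial complex on a vertex type `V`: a collection of non-empty
finite sets of vertices, closed under passing to non-empty subsets. -/
structure ASC (V : Type) where
  faces : Set (Finset V)
  nonempty_of_mem : ∀ s ∈ faces, s.Nonempty
  down_closed : ∀ s ∈ faces, ∀ t ⊆ s, t.Nonempty → t ∈ faces

/-- The set of vertices of a complex. -/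
def ASC.vertices {V : Type} (K : ASC V) : Set V := {v | ({v} : Finset V) ∈ K.faces}

/-- The (first) barycentric subdivision, combinatorially: its vertices are the faces
of `K` (thought of as their barycenters) and its faces are the non-empty chains of
faces of `K`. -/
def sd {V : Type} (K : ASC V) : ASC (Finset V) where
  faces := {c | (∀ s ∈ c, s ∈ K.faces) ∧ IsChain (· ⊆ ·) (↑c : Set (Finset V)) ∧ c.Nonempty}
  nonempty_of_mem := fun _ hc => hc.2.2
  down_closed := fun _ hc _ ht htne =>
    ⟨fun s hs => hc.1 s (ht hs), IsChain.mono (r := fun a b : Finset V => a ⊆ b) (Finset.coe_subset.mpr ht) hc.2.1, htne⟩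

/-- The barycentric star `bst L` of a subcomplex `L` of `K`: the subcomplex of the
barycentric subdivision of `K` consisting of the simplices contained in the
barycentric star of some vertex of `L`. -/
def bstC {V : Type} (K L : ASC V) : ASC (Finset V) where
  faces := {c | c ∈ (sd K).faces ∧ ∃ v, ({v} : Finset V) ∈ L.faces ∧ ∀ s ∈ c, v ∈ s}
  nonempty_of_mem := fun _ hc => hc.1.2.2
  down_closed := fun c hc t ht htne =>
    ⟨(sd K).down_closed c hc.1 t ht htne,
      hc.2.elim fun v hv => ⟨v, hv.1, fun s hs => hv.2 s (ht hs)⟩⟩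

/-- Iterated `Finset`: the vertex type of the `m`-th barycentric subdivision. -/
def SdIter : ℕ → Type → Type
  | 0, V => V
  | m + 1, V => SdIter m (Finset V)

/-- The `m`-th barycentric subdivision. -/
def sdPow : ∀ (m : ℕ) {V : Type}, ASC V → ASC (SdIter m V)
  | 0, _, K => K
  | m + 1, _, K => sdPow m (sd K)

/-- The canonical copy of a vertex of `K` among the vertices of the `m`-th
barycentric subdivision of `K`. -/
def vIter : ∀ (m : ℕ) {V : Type}, V → SdIter m V
  | 0, _, v => v
  | m + 1, _, v => vIter m ({v} : Finset _)

/-! ### Auxiliary lemmas -/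

attribute [local instance] Classical.decEq

section StarLemmas

variable {X ι : Type} {F : ι → Set X}

lemma subset_starSet (A : Set X) : A ⊆ starSet F A := Set.subset_union_left

lemma starSet_mono {A B : Set X} (h : A ⊆ B) : starSet F A ⊆ starSet F B := by
  apply Set.union_subset
  · exact h.trans Set.subset_union_left
  · refine Set.iUnion₂_subset fun k hk => ?_
    refine Set.subset_union_of_subset_right
      (Set.subset_iUnion₂ (s := fun k _ => F k) k ?_) _
    exact hk.mono (Set.inter_subset_inter_right _ h)

lemma starPow_mono (r : ℕ) (i : ι) : starPow F r i ⊆ starPow F (r + 1) i :=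
  subset_starSet _

lemma starPow_step {i j : ι} (h : (F i ∩ F j).Nonempty) :
    ∀ r, starPow F r i ⊆ starPow F (r + 1) j
  | 0 => fun x hx =>
      Set.subset_union_of_subset_right
        (Set.subset_iUnion₂ (s := fun k _ => F k) i h) _ hx
  | r + 1 => starSet_mono (starPow_step h r)

end StarLemmas

/-- Anchored hop-paths in a simplicial complex: `AReach N c n z` means there is a
walk of `n + 1` edges from the face `c` to the vertex `z`, whose first edge is a
face containing all of `c`. -/
def AReach {W : Type} (N : ASC W) (c : Finset W) : ℕ → W → Prop
  | 0, z => ∃ e ∈ N.faces, c ⊆ e ∧ z ∈ e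
  | n + 1, z => ∃ y, AReach N c n y ∧ ∃ e ∈ N.faces, y ∈ e ∧ z ∈ e

/-- The canonical identification `SdIter (m+1) V ≃ Finset (SdIter m V)`. -/
def sdEquiv : ∀ (m : ℕ) (V : Type), SdIter (m + 1) V ≃ Finset (SdIter m V)
  | 0, V => Equiv.refl (Finset V)
  | m + 1, V => sdEquiv m (Finset V)

theorem sdEquiv_vIter : ∀ (m : ℕ) (V : Type) (v : V),
    sdEquiv m V (vIter (m + 1) v) = ({vIter m v} : Finset (SdIter m V))
  | 0, _, _ => rfl
  | m + 1, V, v => sdEquiv_vIter m (Finset V) ({v} : Finset V)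

theorem commSd : ∀ (m : ℕ) (V : Type) (K : ASC V) (D : Finset (SdIter (m + 1) V)),
    D ∈ (sdPow (m + 1) K).faces ↔ D.map (sdEquiv m V).toEmbedding ∈ (sd (sdPow m K)).faces
  | 0, V, K, D => by
      have hD : D.map (sdEquiv 0 V).toEmbedding = D := by
        exact Finset.map_refl
      rw [hD]
      exact Iff.rfl
  | m + 1, V, K, D => commSd m (Finset V) (sd K) D

/-- Transport an anchored walk backwards through an identification of complexes. -/
lemma areach_transport {A B : Type} (E : A ≃ B) (NA : ASC A) (NB : ASC B)
    (hcorr : ∀ D : Finset A, D ∈ NA.faces ↔ D.map E.toEmbedding ∈ NB.faces)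
    (c : Finset A) : ∀ (n : ℕ) (z : A),
      AReach NB (c.map E.toEmbedding) n (E z) → AReach NA c n z := by
  have hpull : ∀ e ∈ NB.faces, e.map E.symm.toEmbedding ∈ NA.faces := by
    intro e he
    rw [hcorr]
    have h : (e.map E.symm.toEmbedding).map E.toEmbedding = e := by
      ext b; simp
    rwa [h]
  intro n
  induction n with
  | zero =>
      rintro z ⟨e, he, hce, hze⟩
      refine ⟨e.map E.symm.toEmbedding, hpull e he, ?_, ?_⟩
      · intro a ha
        have hEa : E a ∈ e := hce (Finset.mem_map_of_mem _ ha)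
        exact Finset.mem_map.mpr ⟨E a, hEa, by simp⟩
      · exact Finset.mem_map.mpr ⟨E z, hze, by simp⟩
  | succ n ih =>
      rintro z ⟨y, hy, e, he, hye, hze⟩
      refine ⟨E.symm y, ih _ ?_, e.map E.symm.toEmbedding, hpull e he, ?_, ?_⟩
      · rwa [Equiv.apply_symm_apply]
      · exact Finset.mem_map.mpr ⟨y, hye, rfl⟩
      · exact Finset.mem_map.mpr ⟨E z, hze, by simp⟩

/-- Doubling an anchored walk through one barycentric subdivision. -/
lemma areach_double {W : Type} (N : ASC W) (C : Finset (Finset W))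
    (hC : C ∈ (sd N).faces) (cm : Finset W) (hcm : cm ∈ C)
    (hmax : ∀ s ∈ C, s ⊆ cm) :
    ∀ (n : ℕ) (z : W), AReach N cm n z →
      AReach (sd N) C (2 * n + 1) ({z} : Finset W) := by
  have hCf := hC.1
  have hCch := hC.2.1
  intro n
  induction n with
  | zero =>
      rintro z ⟨e, he, hce, hze⟩
      have hzf : ({z} : Finset W) ∈ N.faces :=
        N.down_closed e he {z} (Finset.singleton_subset_iff.mpr hze)
          (Finset.singleton_nonempty z)
      refine ⟨e, ⟨insert e C, ⟨?_, ?_, Finset.insert_nonempty _ _⟩,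
        Finset.subset_insert _ _, Finset.mem_insert_self _ _⟩, ?_⟩
      · intro s hs
        rcases Finset.mem_insert.mp hs with rfl | hs
        · exact he
        · exact hCf s hs
      · rw [Finset.coe_insert]
        refine hCch.insert fun s hs _ => Or.inr ?_
        exact (hmax s hs).trans hce
      · refine ⟨insert ({z} : Finset W) {e}, ⟨?_, ?_, Finset.insert_nonempty _ _⟩,
          ?_, Finset.mem_insert_self _ _⟩
        · intro s hs
          rcases Finset.mem_insert.mp hs with rfl | hs
          · exact hzf
          · rw [Finset.mem_singleton.mp hs]; exact he
        · simp only [Finset.coe_insert, Finset.coe_singleton]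
          refine (Set.Subsingleton.isChain (by simp)).insert fun s hs _ => Or.inl ?_
          rw [Set.mem_singleton_iff.mp hs]
          exact Finset.singleton_subset_iff.mpr hze
        · exact Finset.mem_insert_of_mem (Finset.mem_singleton_self _)
  | succ n ih =>
      rintro z ⟨y, hy, e, he, hye, hze⟩
      have h1 := ih y hy
      have hyf : ({y} : Finset W) ∈ N.faces :=
        N.down_closed e he {y} (Finset.singleton_subset_iff.mpr hye)
          (Finset.singleton_nonempty y)
      have hzf : ({z} : Finset W) ∈ N.faces :=
        N.down_closed e he {z} (Finset.singleton_subset_iff.mpr hze)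
          (Finset.singleton_nonempty z)
      have hface1 : insert ({y} : Finset W) {e} ∈ (sd N).faces := by
        refine ⟨?_, ?_, Finset.insert_nonempty _ _⟩
        · intro s hs
          rcases Finset.mem_insert.mp hs with rfl | hs
          · exact hyf
          · rw [Finset.mem_singleton.mp hs]; exact he
        · simp only [Finset.coe_insert, Finset.coe_singleton]
          refine (Set.Subsingleton.isChain (by simp)).insert fun s hs _ => Or.inl ?_
          rw [Set.mem_singleton_iff.mp hs]
          exact Finset.singleton_subset_iff.mpr hye
      have hface2 : insert ({z} : Finset W) {e} ∈ (sd N).faces := by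
        refine ⟨?_, ?_, Finset.insert_nonempty _ _⟩
        · intro s hs
          rcases Finset.mem_insert.mp hs with rfl | hs
          · exact hzf
          · rw [Finset.mem_singleton.mp hs]; exact he
        · simp only [Finset.coe_insert, Finset.coe_singleton]
          refine (Set.Subsingleton.isChain (by simp)).insert fun s hs _ => Or.inl ?_
          rw [Set.mem_singleton_iff.mp hs]
          exact Finset.singleton_subset_iff.mpr hze
      have hkey : AReach (sd N) C (2 * n + 1 + 1 + 1) ({z} : Finset W) := by
        refine ⟨e, ⟨{y}, h1, insert ({y} : Finset W) {e}, hface1,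
          Finset.mem_insert_self _ _,
          Finset.mem_insert_of_mem (Finset.mem_singleton_self _)⟩,
          insert ({z} : Finset W) {e}, hface2,
          Finset.mem_insert_of_mem (Finset.mem_singleton_self _),
          Finset.mem_insert_self _ _⟩
      have harith : 2 * (n + 1) + 1 = 2 * n + 1 + 1 + 1 := by ring
      rwa [harith]

/-- The key combinatorial lemma: every face of the `(m+1)`-st barycentric subdivision
admits an anchored walk of length `2^m` to the canonical copy of a vertex of `K`. -/
lemma hopBase {V : Type} (K : ASC V) (c : Finset (Finset V)) (hc : c ∈ (sd K).faces) :
    ∃ v : V, ({v} : Finset V) ∈ K.faces ∧ AReach (sd K) c 0 ({v} : Finset V) := by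
  obtain ⟨hf, hch, hcne⟩ := hc
  obtain ⟨s₀, hs₀, hminl⟩ : ∃ m ∈ c, ∀ x ∈ c, ¬ x < m := by
    obtain ⟨m, hm⟩ := Finset.exists_minimal hcne
    exact ⟨m, hm.1, fun x hx hlt => (lt_irrefl x) (hlt.trans_le (hm.2 hx hlt.le))⟩
  have hmin : ∀ s ∈ c, s₀ ⊆ s := by
    intro s hs
    rcases eq_or_ne s s₀ with rfl | hne'
    · exact subset_rfl
    · rcases hch (Finset.mem_coe.mpr hs₀) (Finset.mem_coe.mpr hs) (Ne.symm hne') with h | h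
      · exact h
      · exact absurd (lt_of_le_of_ne (Finset.le_iff_subset.mpr h) hne') (hminl s hs)
  have hs₀f : s₀ ∈ K.faces := hf s₀ hs₀
  obtain ⟨v, hv⟩ := K.nonempty_of_mem s₀ hs₀f
  have hvf : ({v} : Finset V) ∈ K.faces :=
    K.down_closed s₀ hs₀f {v} (Finset.singleton_subset_iff.mpr hv)
      (Finset.singleton_nonempty v)
  refine ⟨v, hvf, ?_⟩
  refine ⟨insert ({v} : Finset V) c, ⟨?_, ?_, Finset.insert_nonempty _ _⟩,
    Finset.subset_insert _ _, Finset.mem_insert_self _ _⟩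
  · intro s hs
    rcases Finset.mem_insert.mp hs with rfl | hs
    · exact hvf
    · exact hf s hs
  · rw [Finset.coe_insert]
    refine hch.insert fun s hs _ => Or.inl ?_
    exact Finset.singleton_subset_iff.mpr (hmin s hs hv)

theorem hop {V : Type} (K : ASC V) : ∀ (m : ℕ) (c : Finset (SdIter (m + 1) V)),
    c ∈ (sdPow (m + 1) K).faces →
    ∃ v : V, ({v} : Finset V) ∈ K.faces ∧
      AReach (sdPow (m + 1) K) c (2 ^ m - 1) (vIter (m + 1) v) := by
  intro m
  induction m with
  | zero =>
      intro c hc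
      exact hopBase K c hc
  | succ m ih =>
      intro c hc
      have hC : c.map (sdEquiv (m + 1) V).toEmbedding ∈ (sd (sdPow (m + 1) K)).faces :=
        (commSd (m + 1) V K c).mp hc
      obtain ⟨cm, hcm, hmaxl⟩ : ∃ t ∈ c.map (sdEquiv (m + 1) V).toEmbedding,
          ∀ x ∈ c.map (sdEquiv (m + 1) V).toEmbedding, ¬ t < x := by
        obtain ⟨m', hm'⟩ := Finset.exists_maximal hC.2.2
        exact ⟨m', hm'.1, fun x hx hlt => (lt_irrefl m') (hlt.trans_le (hm'.2 hx hlt.le))⟩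
      have hmax : ∀ s ∈ c.map (sdEquiv (m + 1) V).toEmbedding, s ⊆ cm := by
        intro s hs
        rcases eq_or_ne s cm with rfl | hne'
        · exact subset_rfl
        · rcases hC.2.1 (Finset.mem_coe.mpr hs) (Finset.mem_coe.mpr hcm) hne' with h | h
          · exact h
          · exact absurd (lt_of_le_of_ne (Finset.le_iff_subset.mpr h) (Ne.symm hne'))
              (hmaxl s hs)
      have hcmf : cm ∈ (sdPow (m + 1) K).faces := hC.1 cm hcm
      obtain ⟨v, hv, har⟩ := ih cm hcmf
      have hdouble := areach_double (sdPow (m + 1) K) _ hC cm hcm hmax _ _ har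
      have harith : 2 * (2 ^ m - 1) + 1 = 2 ^ (m + 1) - 1 := by
        have h1 : 1 ≤ 2 ^ m := Nat.one_le_two_pow
        have h2 : 2 ^ (m + 1) = 2 ^ m * 2 := pow_succ 2 m
        omega
      rw [harith, ← sdEquiv_vIter (m + 1) V v] at hdouble
      exact ⟨v, hv, areach_transport (sdEquiv (m + 1) V) (sdPow (m + 2) K) _
        (commSd (m + 1) V K) c _ _ hdouble⟩

/-- Converting an anchored walk in the nerve into star inclusions for the cover. -/
lemma bridge {X ι W : Type} (F : ι → Set X) (N : ASC W) (e : ι → W)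
    (hsurj : ∀ w : W, ({w} : Finset W) ∈ N.faces → ∃ i, e i = w)
    (hadj : ∀ a b : ι, ({e a, e b} : Finset W) ∈ N.faces → e a ≠ e b →
      (F a ∩ F b).Nonempty)
    (i : ι) : ∀ (n : ℕ) (z : W), AReach N ({e i} : Finset W) n z →
      ∃ j, e j = z ∧ ∀ r, starPow F r i ⊆ starPow F (r + n + 1) j := by
  intro n
  induction n with
  | zero =>
      rintro z ⟨e', he', hce, hze⟩
      have hei : e i ∈ e' := hce (Finset.mem_singleton_self _)
      rcases eq_or_ne z (e i) with rfl | hne'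
      · exact ⟨i, rfl, fun r => starPow_mono r i⟩
      · have hpair : ({e i, z} : Finset W) ∈ N.faces :=
          N.down_closed e' he' _ (Finset.insert_subset hei
            (Finset.singleton_subset_iff.mpr hze)) (Finset.insert_nonempty _ _)
        have hzf : ({z} : Finset W) ∈ N.faces :=
          N.down_closed e' he' {z} (Finset.singleton_subset_iff.mpr hze)
            (Finset.singleton_nonempty z)
        obtain ⟨j, hj⟩ := hsurj z hzf
        have hF : (F i ∩ F j).Nonempty := by
          apply hadj i j
          · rw [hj]; exact hpair
          · rw [hj]; exact fun h => hne' h.symm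
        exact ⟨j, hj, fun r => starPow_step hF r⟩
  | succ n ih =>
      rintro z ⟨y, hy, e', he', hye, hze⟩
      obtain ⟨j', hj', hsub⟩ := ih y hy
      rcases eq_or_ne z y with rfl | hne'
      · exact ⟨j', hj', fun r => (hsub r).trans (starPow_mono _ j')⟩
      · have hpair : ({e j', z} : Finset W) ∈ N.faces := by
          rw [hj']
          exact N.down_closed e' he' _ (Finset.insert_subset hye
            (Finset.singleton_subset_iff.mpr hze)) (Finset.insert_nonempty _ _)
        have hzf : ({z} : Finset W) ∈ N.faces :=
          N.down_closed e' he' {z} (Finset.singleton_subset_iff.mpr hze)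
            (Finset.singleton_nonempty z)
        obtain ⟨j, hj⟩ := hsurj z hzf
        have hF : (F j' ∩ F j).Nonempty := by
          apply hadj j' j
          · rw [hj]; exact hpair
          · rw [hj, hj']; exact fun h => hne' h.symm
        exact ⟨j, hj, fun r => (hsub r).trans (starPow_step hF (r + n + 1))⟩

/-- For an `m`-barycentric cover `F` with primary complex `K` (encoded via `e`, an
isomorphism of the nerve of `F` with the `m`-th barycentric subdivision of `K`):
`st^(2^(m-1)-1) F ≺ jn^m F ⊆ st^(2^m-1) F`, where the elements of the `m`-th join
`jn^m F` are the `(2^m-1)`-th stars of the elements of `F` corresponding to vertices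
of `K`. -/
theorem star_join_star {X ι V : Type} (F : ι → Set X)
    (hcover : (⋃ i, F i) = univ) (hne : ∀ i, (F i).Nonempty)
    (K : ASC V) (hlf : ∀ v ∈ K.vertices, {s ∈ K.faces | v ∈ s}.Finite)
    (m : ℕ) (e : ι → SdIter m V)
    (hinj : Function.Injective e)
    (hfaces : ∀ J : Finset ι, J.Nonempty →
      ((⋂ i ∈ J, F i).Nonempty ↔
        ∃ c ∈ (sdPow m K).faces, (↑c : Set (SdIter m V)) = e '' (↑J : Set ι)))
    (hsurj : ∀ w : SdIter m V, ({w} : Finset (SdIter m V)) ∈ (sdPow m K).faces →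
      ∃ i, e i = w) :
    (∀ i : ι, ∃ j : ι, (∃ v : V, ({v} : Finset V) ∈ K.faces ∧ e j = vIter m v) ∧
        starPow F (2 ^ (m - 1) - 1) i ⊆ starPow F (2 ^ m - 1) j) ∧
      ∀ j : ι, (∃ v : V, ({v} : Finset V) ∈ K.faces ∧ e j = vIter m v) →
        ∃ i : ι, starPow F (2 ^ m - 1) j = starPow F (2 ^ m - 1) i := by
  constructor
  · intro i
    have hvert : ({e i} : Finset (SdIter m V)) ∈ (sdPow m K).faces := by
      have h1 : (⋂ k ∈ ({i} : Finset ι), F k).Nonempty := by simpa using hne i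
      obtain ⟨c, hcf, hcc⟩ := (hfaces {i} (Finset.singleton_nonempty i)).mp h1
      have hc : c = {e i} := Finset.coe_injective (by simpa using hcc)
      rwa [hc] at hcf
    have hadj : ∀ a b : ι, ({e a, e b} : Finset (SdIter m V)) ∈ (sdPow m K).faces →
        e a ≠ e b → (F a ∩ F b).Nonempty := by
      intro a b hab hne'
      have hab' : a ≠ b := fun h => hne' (by rw [h])
      have h2 := (hfaces {a, b} ⟨a, Finset.mem_insert_self _ _⟩).mpr
        ⟨{e a, e b}, hab, by simp [Set.image_pair]⟩
      have h3 : (⋂ k ∈ ({a, b} : Finset ι), F k) = F a ∩ F b := by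
        simp
      rwa [h3] at h2
    cases m with
    | zero =>
        exact ⟨i, ⟨e i, hvert, rfl⟩, subset_rfl⟩
    | succ m' =>
        obtain ⟨v, hv, har⟩ := hop K m' {e i} hvert
        obtain ⟨j, hj, hsub⟩ := bridge F (sdPow (m' + 1) K) e hsurj hadj i _ _ har
        refine ⟨j, ⟨v, hv, hj⟩, ?_⟩
        have harith : (2 ^ (m' + 1 - 1) - 1) + (2 ^ m' - 1) + 1 = 2 ^ (m' + 1) - 1 := by
          have h1 : 1 ≤ 2 ^ m' := Nat.one_le_two_pow
          have h2 : 2 ^ (m' + 1) = 2 ^ m' * 2 := pow_succ 2 m'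
          have h3 : m' + 1 - 1 = m' := rfl
          rw [h3]
          omega
        have h4 := hsub (2 ^ (m' + 1 - 1) - 1)
        rwa [harith] at h4
  · intro j _
    exact ⟨j, rfl⟩

end NobelingPaper
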